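/- For the Maddah-Ali & Niesen placement with parameters K and t, assume ε ≥ 1, t ≥ 2, and C(K−1, t−1) ≥ 2ε + 1. Then ℓ*(X,ε) ≥ 2ε · (K − 1 − ⌈(t−1) · (2ε)^{1/(t−1)}⌉), where (2ε)^{1/(t−1)} denotes the real (t−1)-th root of 2ε and the inequality is read in the real numbers. -/

import Mathlib

open Matrix Finset

/-- `H` is a valid encoder for the `(X, ε)` cache update problem: for every node `k`
there is a decoder `D_k` recovering `(w+e)|_{X_k}` from the codeword `H(w+e)` and the
side information `w|_{X_k}`, for all `w` and all updates `e` of Hamming weight at most `ε`. -/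
def ValidEncoder {𝓕 𝓚 : Type} [Fintype 𝓕] (F : Type) [Field F] [Fintype F]
    (X : 𝓚 → Finset 𝓕) (ε : ℕ) {l : ℕ} (H : Matrix (Fin l) 𝓕 F) : Prop :=
  ∀ k : 𝓚, ∃ D : (Fin l → F) → ({f // f ∈ X k} → F) → ({f // f ∈ X k} → F),
    ∀ w e : 𝓕 → F, {f | e f ≠ 0}.ncard ≤ ε →
      D (H.mulVec (w + e)) (fun f => w f.1) = fun f => (w + e) f.1

/-- The optimal codelength `ℓ*(X, ε)`: the least `l` for which some finite field `F`
admits a valid encoder `H ∈ F^{l×F}` for the `(X, ε)` cache update problem. -/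
noncomputable def optLen {𝓕 𝓚 : Type} [Fintype 𝓕] (X : 𝓚 → Finset 𝓕) (ε : ℕ) : ℕ :=
  sInf {l : ℕ | ∃ (F : Type) (inst1 : Field F) (inst2 : Fintype F)
    (H : Matrix (Fin l) 𝓕 F), @ValidEncoder 𝓕 𝓚 _ F inst1 inst2 X ε l H}

/-!
If `H *ᵥ c = 0` and `c` has at most `2ε` nonzero entries inside the cache `X k`, then `c`
vanishes on `X k`: split those entries into two updates `u`, `v` of weight at most `ε`; the
inputs `0 + u` and `(u - c - v) + v` have the same syndrome, and node `k` holds the same side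
information `0 = u - c - v` for both, so decoding forces `u = u - c` on `X k`. Hence columns of
`H` indexed by a family of subfiles, each of which lies in a cache containing at most `2ε`
members of the family, are linearly independent.

For the Maddah-Ali–Niesen placement let `s = ⌈(t-1)(2ε)^{1/(t-1)}⌉`, so that
`C(s, t-1) ≥ (s/(t-1))^{t-1} ≥ 2ε`. Fix an `s`-set `A` of nodes, a family `𝓑` of `2ε`
`(t-1)`-subsets of `A`, and take the subfiles `{k} ∪ B` with `k ∉ A`, `B ∈ 𝓑`: node `k` caches
exactly `2ε` of them, so `ℓ* ≥ (K - s) · 2ε`.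
-/

open Function

theorem ncard_support_indicator_le {α M : Type*} [Zero M] (T : Finset α) (c : α → M) :
    (support ((T : Set α).indicator c)).ncard ≤ #T :=
  (Set.ncard_le_ncard Set.support_indicator_subset T.finite_toSet).trans
    (Set.ncard_coe_finset T).le

section ValidEncoder

variable {𝓕 𝓚 : Type} [Fintype 𝓕] {F : Type} [Field F] [Fintype F]
  {X : 𝓚 → Finset 𝓕} {ε l : ℕ} {H : Matrix (Fin l) 𝓕 F}

theorem ValidEncoder.eq_on_of_mulVec_eq (hH : ValidEncoder F X ε H) (k : 𝓚)
    {w e w' e' : 𝓕 → F} (he : {f | e f ≠ 0}.ncard ≤ ε) (he' : {f | e' f ≠ 0}.ncard ≤ ε)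
    (hw : ∀ f ∈ X k, w f = w' f) (hmul : H *ᵥ (w + e) = H *ᵥ (w' + e')) :
    ∀ f ∈ X k, (w + e) f = (w' + e') f := by
  obtain ⟨D, hD⟩ := hH k
  intro f hf
  have hside : (fun f : {f // f ∈ X k} => w f.1) = fun f => w' f.1 :=
    funext fun f => hw f.1 f.2
  have := congrFun (hD w e he) ⟨f, hf⟩
  rw [hmul, hside, hD w' e' he'] at this
  exact this.symm

theorem ValidEncoder.eq_zero_on_of_mulVec_eq_zero [DecidableEq F]
    (hH : ValidEncoder F X ε H) (k : 𝓚) {c : 𝓕 → F} (hc : H *ᵥ c = 0)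
    (hsupp : #{f ∈ X k | c f ≠ 0} ≤ 2 * ε) :
    ∀ f ∈ X k, c f = 0 := by
  classical
  set S := {f ∈ X k | c f ≠ 0}
  obtain ⟨T, hTS, hT⟩ := exists_subset_card_eq (min_le_right ε #S)
  set u := (T : Set 𝓕).indicator c
  set v := ((S \ T : Finset 𝓕) : Set 𝓕).indicator (-c)
  have hcuv : ∀ f ∈ X k, u f - c f - v f = 0 := by
    intro f hf
    by_cases hfT : f ∈ T
    · simp [u, v, hfT]
    by_cases hfS : f ∈ S
    · simp [u, v, hfT, hfS]
    have hcf : c f = 0 := by simpa [S, hf] using hfS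
    simp [u, v, hfT, hfS, hcf]
  have hv : #(S \ T) ≤ ε := by
    rw [card_sdiff_of_subset hTS]; omega
  have := hH.eq_on_of_mulVec_eq k (w := 0) (e := u) (w' := u - c - v) (e' := v)
    ((ncard_support_indicator_le T c).trans (hT.trans_le (min_le_left _ _)))
    ((ncard_support_indicator_le _ _).trans hv) (fun f hf => (hcuv f hf).symm)
    (by rw [zero_add, sub_add_cancel, mulVec_sub, hc, sub_zero])
  intro f hf
  simpa using (this f hf).symm

theorem ValidEncoder.card_le_of_injective [DecidableEq 𝓕] {α : Type*} [Fintype α]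
    (hH : ValidEncoder F X ε H) {ι : α → 𝓕} (hι : Injective ι) (ν : α → 𝓚) (hν : ∀ a, ι a ∈ X (ν a))
    (hsparse : ∀ a, #{b | ι b ∈ X (ν a)} ≤ 2 * ε) :
    Fintype.card α ≤ l := by
  classical
  have hli : LinearIndependent F fun a => H.col (ι a) := by
    rw [Fintype.linearIndependent_iff]
    intro g hg a
    set c : 𝓕 → F := ∑ b, g b • Pi.single (ι b) 1
    have hc_apply : ∀ f, c f = ∑ b, if f = ι b then g b else 0 := by
      intro f
      simp [c, Pi.single_apply]
    have hc_ι : ∀ b, c (ι b) = g b := by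
      intro b
      simp [hc_apply, hι.eq_iff]
    have hc : H *ᵥ c = 0 := by
      simpa [c, mulVec_sum, mulVec_smul, mulVec_single_one] using hg
    have hsupp : {f ∈ X (ν a) | c f ≠ 0} ⊆ image ι {b | ι b ∈ X (ν a)} := by
      intro f hf
      obtain ⟨hfX, hcf⟩ := mem_filter.1 hf
      obtain ⟨b, -, hb⟩ := exists_ne_zero_of_sum_ne_zero ((hc_apply f).symm.trans_ne hcf)
      obtain rfl : f = ι b := by by_contra h; simp [h] at hb
      exact mem_image_of_mem ι (mem_filter.2 ⟨mem_univ b, hfX⟩)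
    rw [← hc_ι]
    exact hH.eq_zero_on_of_mulVec_eq_zero (ν a) hc
      ((card_le_card hsupp).trans (card_image_le.trans (hsparse a))) _ (hν a)
  simpa using hli.fintype_card_le_finrank

end ValidEncoder

theorem exists_validEncoder {𝓕 𝓚 : Type} [Fintype 𝓕] (X : 𝓚 → Finset 𝓕) (ε : ℕ) :
    ∃ l, ∃ (F : Type) (_ : Field F) (_ : Fintype F) (H : Matrix (Fin l) 𝓕 F),
      ValidEncoder F X ε H := by
  classical
  let e := Fintype.equivFin 𝓕
  refine ⟨_, ZMod 2, inferInstance, inferInstance,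
    (1 : Matrix 𝓕 𝓕 (ZMod 2)).submatrix e.symm (Equiv.refl 𝓕),
    fun k => ⟨fun y _ f => y (e f), fun w u _ => ?_⟩⟩
  funext f
  rw [submatrix_mulVec_equiv, one_mulVec]
  simp

theorem le_optLen {𝓕 𝓚 : Type} [Fintype 𝓕] {X : 𝓚 → Finset 𝓕} {ε n : ℕ}
    (h : ∀ (l : ℕ) (F : Type) [Field F] [Fintype F] (H : Matrix (Fin l) 𝓕 F),
      ValidEncoder F X ε H → n ≤ l) :
    n ≤ optLen X ε := by
  obtain ⟨F, _, _, H, hH⟩ := Nat.sInf_mem (exists_validEncoder X ε)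
  exact h _ F H hH

def mnPlacement (K t : ℕ) (k : Fin K) : Finset {s : Finset (Fin K) // s.card = t} :=
  univ.filter fun f => k ∈ f.1

theorem mnPlacement_card_mul_card_le {K t ε l : ℕ} {A : Finset (Fin K)}
    {𝓑 : Finset (Finset (Fin K))} (h𝓑 : 𝓑 ⊆ A.powersetCard t) (h𝓑ε : #𝓑 ≤ 2 * ε)
    {F : Type} [Field F] [Fintype F] {H : Matrix (Fin l) {s : Finset (Fin K) // s.card = t + 1} F}
    (hH : ValidEncoder F (mnPlacement K (t + 1)) ε H) :
    #Aᶜ * #𝓑 ≤ l := by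
  have hB : ∀ B ∈ 𝓑, B ⊆ A ∧ #B = t := fun B hB => mem_powersetCard.1 (h𝓑 hB)
  have hnotMem : ∀ (k : ↥Aᶜ) (B : ↥𝓑), k.1 ∉ B.1 :=
    fun k B h => mem_compl.1 k.2 ((hB _ B.2).1 h)
  let ι : ↥Aᶜ × ↥𝓑 → {s : Finset (Fin K) // s.card = t + 1} := fun p =>
    ⟨insert p.1.1 p.2.1, by rw [card_insert_of_notMem (hnotMem _ _), (hB _ p.2.2).2]⟩
  have hmem : ∀ (k : ↥Aᶜ) p, ι p ∈ mnPlacement K (t + 1) k ↔ p.1 = k := by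
    intro k p
    simp only [mnPlacement, mem_filter, mem_univ, true_and, ι, mem_insert, hnotMem k p.2,
      or_false]
    exact ⟨fun h => Subtype.ext h.symm, fun h => congrArg Subtype.val h.symm⟩
  have hι : Injective ι := by
    intro p q h
    have h1 : q.1 = p.1 := (hmem p.1 q).1 (h ▸ (hmem p.1 p).2 rfl)
    refine Prod.ext h1.symm (Subtype.ext ?_)
    have hval : insert p.1.1 p.2.1 = insert q.1.1 q.2.1 := congrArg Subtype.val h
    rw [← erase_insert (hnotMem p.1 p.2), ← erase_insert (hnotMem q.1 q.2), hval, h1]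
  have hsparse : ∀ p : ↥Aᶜ × ↥𝓑, #{q | ι q ∈ mnPlacement K (t + 1) p.1} ≤ 2 * ε := by
    intro p
    have hsub : univ.filter (fun q => ι q ∈ mnPlacement K (t + 1) p.1) ⊆
        univ.image fun B => (p.1, B) := by
      intro q hq
      rw [mem_filter, hmem] at hq
      exact mem_image.2 ⟨q.2, mem_univ _, Prod.ext hq.2.symm rfl⟩
    calc _ ≤ _ := card_le_card hsub
      _ ≤ #(univ : Finset ↥𝓑) := card_image_le
      _ ≤ 2 * ε := by simpa using h𝓑ε
  have := hH.card_le_of_injective hι (fun p => p.1.1) (fun p => (hmem p.1 p).2 rfl) hsparse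
  rwa [Fintype.card_prod, Fintype.card_coe, Fintype.card_coe] at this

theorem pow_div_le_choose {α : Type*} [Semifield α] [LinearOrder α] [IsStrictOrderedRing α]
    {k n : ℕ} (h : k ≤ n) : ((n : α) / k) ^ k ≤ n.choose k := by
  induction k generalizing n with
  | zero => simp
  | succ k ih =>
    obtain ⟨m, rfl⟩ : ∃ m, n = m + 1 := ⟨n - 1, by omega⟩
    rcases k.eq_zero_or_pos with rfl | hk
    · simp
    have hkm : k ≤ m := by omega
    have hratio : ((m + 1 : ℕ) : α) / (k + 1 : ℕ) ≤ (m : α) / k := by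
      rw [div_le_div_iff₀ (by positivity) (by exact_mod_cast hk)]
      exact_mod_cast (by nlinarith : (m + 1) * k ≤ m * (k + 1))
    have hpascal : ((m + 1 : ℕ) : α) * m.choose k = (m + 1).choose (k + 1) * (k + 1 : ℕ) := by
      exact_mod_cast m.add_one_mul_choose_eq k
    calc (((m + 1 : ℕ) : α) / (k + 1 : ℕ)) ^ (k + 1)
        = ((m + 1 : ℕ) : α) / (k + 1 : ℕ) * (((m + 1 : ℕ) : α) / (k + 1 : ℕ)) ^ k :=
          pow_succ' _ _
      _ ≤ ((m + 1 : ℕ) : α) / (k + 1 : ℕ) * m.choose k := by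
        gcongr
        exact (pow_le_pow_left₀ (by positivity) hratio k).trans (ih hkm)
      _ = (m + 1).choose (k + 1) := by
        rw [div_mul_eq_mul_div, hpascal, mul_div_cancel_right₀ _ (by positivity)]

theorem le_choose_ceil_mul_rpow_inv {m : ℕ} (hm : m ≠ 0) {x : ℝ} (hx : 1 ≤ x) :
    x ≤ (⌈m * x ^ (m⁻¹ : ℝ)⌉₊).choose m := by
  set r := x ^ (m⁻¹ : ℝ)
  set s := ⌈m * r⌉₊
  have hm0 : (0 : ℝ) < m := by exact_mod_cast Nat.pos_of_ne_zero hm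
  have hr : 1 ≤ r := Real.one_le_rpow hx (by positivity)
  have hs : m * r ≤ s := Nat.le_ceil _
  have hms : m ≤ s := by exact_mod_cast (le_mul_of_one_le_right hm0.le hr).trans hs
  calc x = r ^ m := (Real.rpow_inv_natCast_pow (by linarith) hm).symm
    _ ≤ ((s : ℝ) / m) ^ m :=
      pow_le_pow_left₀ (by positivity) (by rw [le_div_iff₀ hm0]; linarith) m
    _ ≤ s.choose m := pow_div_le_choose hms

theorem MN_lower_bound_sparse_general (K t : ℕ) (ht2 : 2 ≤ t)
    (ε : ℕ) (hε : 1 ≤ ε) :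
    (2 * (ε : ℝ)) * ((K : ℝ) - 1 -
        (⌈((t : ℝ) - 1) * ((2 * (ε : ℝ)) ^ (((t : ℝ) - 1)⁻¹))⌉ : ℤ)) ≤
      (optLen (fun k : Fin K =>
        Finset.univ.filter (fun f : {s : Finset (Fin K) // s.card = t} => k ∈ f.1)) ε :
          ℝ) := by
  obtain ⟨m, rfl⟩ : ∃ m, t = m + 1 + 1 := ⟨t - 2, by omega⟩
  change _ ≤ (optLen (mnPlacement K (m + 1 + 1)) ε : ℝ)
  have hm : ((m + 1 + 1 : ℕ) : ℝ) - 1 = (m + 1 : ℕ) := by push_cast; ring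
  rw [hm, ← Int.natCast_ceil_eq_ceil (by positivity), Int.cast_natCast]
  set s := ⌈((m + 1 : ℕ) : ℝ) * (2 * (ε : ℝ)) ^ (((m + 1 : ℕ) : ℝ)⁻¹)⌉₊
  rcases le_or_gt K (s + 1) with hKs | hKs
  · have hK : (K : ℝ) ≤ s + 1 := by exact_mod_cast hKs
    exact (mul_nonpos_of_nonneg_of_nonpos (by positivity) (by linarith)).trans (Nat.cast_nonneg _)
  have hchoose : (2 * ε : ℝ) ≤ s.choose (m + 1) :=
    le_choose_ceil_mul_rpow_inv (by omega) (by norm_cast; omega)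
  obtain ⟨A, -, hA⟩ := exists_subset_card_eq (s := (univ : Finset (Fin K))) (n := s)
    (by rw [card_univ, Fintype.card_fin]; omega)
  obtain ⟨𝓑, h𝓑, h𝓑card⟩ := exists_subset_card_eq (s := A.powersetCard (m + 1)) (n := 2 * ε)
    (by rw [card_powersetCard, hA]; exact_mod_cast hchoose)
  have hbound := le_optLen fun l F _ _ H hH => mnPlacement_card_mul_card_le h𝓑 h𝓑card.le hH
  rw [card_compl, hA, h𝓑card, Fintype.card_fin] at hbound
  have hbound' : ((K - s : ℕ) : ℝ) * (2 * ε : ℕ) ≤ optLen (mnPlacement K (m + 1 + 1)) ε := by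
    exact_mod_cast hbound
  push_cast [Nat.cast_sub (show s ≤ K by omega)] at hbound'
  linarith

/-- For the Maddah-Ali & Niesen placement with parameters `K, t`,
assume `ε ≥ 1`, `t ≥ 2`, `t ≤ K` and `C(K−1, t−1) ≥ 2ε + 1`. Then, in the reals,
`ℓ*(X, ε) ≥ 2ε · (K − 1 − ⌈(t−1) · (2ε)^{1/(t−1)}⌉)`, where the root is the real
`(t−1)`-th root of `2ε`. -/
theorem MN_lower_bound_sparse (K t : ℕ) (ht2 : 2 ≤ t) (htK : t ≤ K)
    (ε : ℕ) (hε : 1 ≤ ε) (hZ : 2 * ε + 1 ≤ Nat.choose (K - 1) (t - 1)) :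
    (2 * (ε : ℝ)) * ((K : ℝ) - 1 -
        (⌈((t : ℝ) - 1) * ((2 * (ε : ℝ)) ^ (((t : ℝ) - 1)⁻¹))⌉ : ℤ)) ≤
      (optLen (fun k : Fin K =>
        Finset.univ.filter (fun f : {s : Finset (Fin K) // s.card = t} => k ∈ f.1)) ε :
          ℝ) :=
  MN_lower_bound_sparse_general K t ht2 ε hε
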